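/- arXiv:2506.19064 — 3 statements merged into one kernel-verified Lean document; each statement's English description precedes it below -/
import Mathlib

section
/- Let μ be a compactly supported probability measure on ℝ. There exist a unique open interval D_μ ⊆ ℝ with D̂_μ ⊆ D_μ and a unique real analytic function R_μ : D_μ → ℝ with R_μ(u) = R̂_μ(u) for all u ∈ D̂_μ∖{0}, such that: for every open interval D ⊆ ℝ containing D̂_μ and every real analytic f : D → ℝ with f(u) = R̂_μ(u) for all u ∈ D̂_μ∖{0}, one has D ⊆ D_μ and f agrees with R_μ on D. -/
open MeasureTheory Filter Set

noncomputable section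

/-- The topological support of a Borel measure on `ℝ`. -/
def msupp (μ : Measure ℝ) : Set ℝ := {x : ℝ | ∀ U ∈ nhds x, μ U ≠ 0}

/-- Compact support: some compact set has full measure. -/
def HasCompactSupp (μ : Measure ℝ) : Prop := ∃ K : Set ℝ, IsCompact K ∧ μ K = 1

/-- `a_μ`, the infimum of the support. -/
def aInf (μ : Measure ℝ) : ℝ := sInf (msupp μ)

/-- `b_μ`, the supremum of the support. -/
def bSup (μ : Measure ℝ) : ℝ := sSup (msupp μ)

/-- The (real) Stieltjes transform `G_μ(z) = ∫ (λ - z)⁻¹ dμ(λ)`. -/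
def Gst (μ : Measure ℝ) (z : ℝ) : ℝ := ∫ l, (l - z)⁻¹ ∂μ

/-- `G_μ(a_μ) = lim_{z ↑ a_μ} G_μ(z) ∈ (0,∞]`, as the supremum (in `EReal`) of the values of
`G_μ` on `(-∞, a_μ)` (the two agree since `G_μ` is increasing there). -/
def GaSup (μ : Measure ℝ) : EReal :=
  sSup ((fun z => ((Gst μ z : ℝ) : EReal)) '' Set.Iio (aInf μ))

/-- `G_μ(b_μ) = lim_{z ↓ b_μ} G_μ(z) ∈ [-∞,0)`, as the infimum (in `EReal`) of the values of
`G_μ` on `(b_μ, ∞)` (the two agree since `G_μ` is increasing there). -/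
def GbInf (μ : Measure ℝ) : EReal :=
  sInf ((fun z => ((Gst μ z : ℝ) : EReal)) '' Set.Ioi (bSup μ))

/-- The interval `D̂_μ = (-G_μ(a_μ), -G_μ(b_μ)) ⊆ ℝ`. -/
def Dhat (μ : Measure ℝ) : Set ℝ :=
  {u : ℝ | -(GaSup μ) < (u : EReal) ∧ (u : EReal) < -(GbInf μ)}

/-- The inverse `G_μ^⟨-1⟩` of the restriction of `G_μ` to `ℝ ∖ [a_μ, b_μ]`. -/
def Ginv (μ : Measure ℝ) (g : ℝ) : ℝ :=
  Function.invFunOn (Gst μ) (Set.Iio (aInf μ) ∪ Set.Ioi (bSup μ)) g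

/-- The real `R`-transform `R̂_μ(u) = G_μ^⟨-1⟩(-u) - u⁻¹`, meaningful for `u ∈ D̂_μ ∖ {0}`. -/
def Rhat (μ : Measure ℝ) (u : ℝ) : ℝ := Ginv μ (-u) - u⁻¹

/-- `ρ` is a free additive convolution of `μ` and `ν`. -/
def IsFreeAdd (μ ν ρ : Measure ℝ) : Prop :=
  IsProbabilityMeasure ρ ∧ HasCompactSupp ρ ∧
  ∃ ε > (0 : ℝ), ∀ u : ℝ, u ∈ Set.Ioo (-ε) ε → u ≠ 0 →
    u ∈ Dhat ρ ∧ u ∈ Dhat μ ∧ u ∈ Dhat ν ∧ Rhat ρ u = Rhat μ u + Rhat ν u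

/-- `μ` is nondegenerate: not a point mass. -/
def Nondeg (μ : Measure ℝ) : Prop := ¬ ∃ c : ℝ, μ = Measure.dirac c

/-- The logarithmic potential `U_ρ(z) = ∫ log |z - λ| dρ(λ)`. -/
def Upot (ρ : Measure ℝ) (z : ℝ) : ℝ := ∫ l, Real.log |z - l| ∂ρ

/-- `E_{μ,ν,z}(g) = ∫₀^g s R̂_μ'(-s) ds + ∫ log (λ - z + R̂_μ(-g)) dν(λ)`. -/
def Efun (μ ν : Measure ℝ) (z : ℝ) (g : ℝ) : ℝ :=
  (∫ s in (0:ℝ)..g, s * deriv (Rhat μ) (-s)) + ∫ l, Real.log (l - z + Rhat μ (-g)) ∂ν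

/-- The domain `Ê_{μ,ν,z}` of `E_{μ,ν,z}`. -/
def Ehat (μ ν : Measure ℝ) (z : ℝ) : Set ℝ :=
  {g : ℝ | -g ∈ Dhat μ ∧ g ≠ 0 ∧ z - Rhat μ (-g) < aInf ν}

/-- `F̂_{μ,ν}(h) = R̂_μ(-G_ν(h)) + h`. -/
def Fhat (μ ν : Measure ℝ) (h : ℝ) : ℝ := Rhat μ (-(Gst ν h)) + h

/-- The domain of `F̂_{μ,ν}`. -/
def FhatDom (μ ν : Measure ℝ) : Set ℝ := {h : ℝ | h < aInf ν ∧ -(Gst ν h) ∈ Dhat μ}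

/-- `Ĥ_{μ,ν}`: points of the domain to the left of which `F̂_{μ,ν}'` is positive. -/
def Hhat (μ ν : Measure ℝ) : Set ℝ :=
  {h : ℝ | h ∈ FhatDom μ ν ∧ ∀ t ∈ FhatDom μ ν, t < h → 0 < deriv (Fhat μ ν) t}

/-- `h*_{μ,ν} = sup Ĥ_{μ,ν}`. -/
def hstar (μ ν : Measure ℝ) : ℝ := sSup (Hhat μ ν)

end

/-!
Away from `0`, `R̂_μ` is real analytic on `D̂_μ`: off `[a_μ, b_μ]` the Stieltjes transform `G_μ` is
the restriction of the holomorphic Cauchy transform and has positive derivative, so it has an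
analytic local inverse. At `0`, take `c < a_μ` and let `ν` be the image of `μ` under
`λ ↦ (λ - c)⁻¹`; then `0 ∉ supp ν` and `G_μ(c + 1/t) = -(t + t² G_ν(t))`. Inverting
`t ↦ t + t² G_ν(t)` near `0` gives an analytic `k` with `k 0 = 0`, `k' 0 = 1` and
`R̂_μ(u) = c + 1/k(u) - 1/u`, which extends analytically across `0`.
Admissible domains are intervals containing `0 ∈ D̂_μ`, so by the identity theorem any two
extensions agree on the intersection of their domains; the union of all admissible domains,
carrying the common value, is the maximal extension.
-/

open Topology

section LocalInverse

variable {𝕜 : Type*} [NontriviallyNormedField 𝕜]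

theorem AnalyticAt.exists_analyticAt_rightInverse [CompleteSpace 𝕜] [CharZero 𝕜] {f : 𝕜 → 𝕜}
    {x : 𝕜} (hf : AnalyticAt 𝕜 f x) (hf' : deriv f x ≠ 0) :
    ∃ g : 𝕜 → 𝕜, AnalyticAt 𝕜 g (f x) ∧ g (f x) = x ∧ deriv g (f x) = (deriv f x)⁻¹ ∧
      ∀ᶠ y in 𝓝 (f x), f (g y) = y :=
  ⟨_, hf.analyticAt_localInverse hf', HasStrictFDerivAt.localInverse_apply_image ..,
    (hf.hasStrictDerivAt.to_localInverse hf').hasDerivAt.deriv,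
    hf.hasStrictDerivAt.eventually_right_inverse hf'⟩

theorem AnalyticAt.analyticAt_invFunOn [CompleteSpace 𝕜] [CharZero 𝕜] {f : 𝕜 → 𝕜}
    {s : Set 𝕜} {x : 𝕜} (hf : AnalyticAt 𝕜 f x) (hf' : deriv f x ≠ 0) (hs : s ∈ 𝓝 x)
    (hinj : InjOn f s) : AnalyticAt 𝕜 (Function.invFunOn f s) (f x) := by
  obtain ⟨g, hg, hgx, -, hfg⟩ := hf.exists_analyticAt_rightInverse hf'
  have hg_mem : ∀ᶠ y in 𝓝 (f x), g y ∈ s := hg.continuousAt.preimage_mem_nhds (by rwa [hgx])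
  refine hg.congr ?_
  filter_upwards [hg_mem, hfg] with y hys hfy
  have hy : ∃ z ∈ s, f z = y := ⟨g y, hys, hfy⟩
  exact hinj hys (Function.invFunOn_mem hy) (hfy.trans (Function.invFunOn_eq hy).symm)

theorem AnalyticAt.exists_analyticAt_eq_inv_sub_inv {k : 𝕜 → 𝕜} (hk : AnalyticAt 𝕜 k 0)
    (hk0 : k 0 = 0) (hk' : deriv k 0 = 1) :
    ∃ h : 𝕜 → 𝕜, AnalyticAt 𝕜 h 0 ∧ ∀ u ≠ 0, k u ≠ 0 → h u = (k u)⁻¹ - u⁻¹ := by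
  -- With `q = dslope k 0` we have `k u = u * q u` and `q 0 = 1`, so
  -- `(k u)⁻¹ - u⁻¹ = -((q u - 1) / u) / q u`, and `(q u - 1) / u = dslope q 0 u`.
  obtain ⟨p, hp⟩ := hk
  have hq := hp.has_fpower_series_dslope_fslope
  have hq0 : dslope k 0 0 = 1 := by rw [dslope_same, hk']
  refine ⟨fun u => -dslope (dslope k 0) 0 u / dslope k 0 u,
    hq.has_fpower_series_dslope_fslope.analyticAt.neg.div hq.analyticAt
      (by rw [hq0]; exact one_ne_zero),
    fun u hu hku => ?_⟩
  simp only [dslope_of_ne _ hu, slope_def_field, hq0, hk0, sub_zero]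
  field_simp
  ring

end LocalInverse

section Stieltjes

variable {μ : Measure ℝ} {x : ℝ}

theorem Gst_eq_resolventTransform : Gst μ = resolventTransform (A := ℝ) μ := by
  ext x
  simp [Gst, resolventTransform, resolvent, Ring.inverse_eq_inv']

theorem Gst_eq_re_resolventTransform (x : ℝ) :
    Gst μ x = (resolventTransform (A := ℂ) μ x).re := by
  have h : resolventTransform (A := ℂ) μ x = ((Gst μ x : ℝ) : ℂ) := by
    rw [Gst, ← integral_complex_ofReal]
    simp [resolventTransform, resolvent, Ring.inverse_eq_inv']
  rw [h, Complex.ofReal_re]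

variable [IsFiniteMeasure μ]

theorem integrable_inv_sub (hx : x ∉ μ.support) : Integrable (fun l => (l - x)⁻¹) μ := by
  have h := integrable_resolvent (A := ℝ) (μ := μ) (a := x) (by simpa using hx)
  unfold resolvent at h
  simpa [Ring.inverse_eq_inv'] using h

theorem hasDerivAt_Gst (hx : x ∉ μ.support) :
    HasDerivAt (Gst μ) (∫ l, ((l - x)⁻¹) ^ 2 ∂μ) x := by
  have := hasDerivAt_resolventTransform (μ := μ) x (by simpa using hx)
  simpa [Gst_eq_resolventTransform, resolvent, Ring.inverse_eq_inv'] using this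

theorem analyticAt_Gst (hx : x ∉ μ.support) : AnalyticAt ℝ (Gst μ) x := by
  have hclosed : IsClosed (algebraMap ℝ ℂ '' μ.support) :=
    Complex.isometry_ofReal.isClosedEmbedding.isClosed_iff_image_isClosed.mp
      Measure.isClosed_support
  have hx' : (x : ℂ) ∈ (algebraMap ℝ ℂ '' μ.support)ᶜ := by simpa using hx
  have := (analyticOn_resolventTransform.analyticAt (hclosed.isOpen_compl.mem_nhds hx')).re_ofReal
  simpa only [← Gst_eq_re_resolventTransform] using this

theorem integrable_inv_sub_sq (hx : x ∉ μ.support) :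
    Integrable (fun l => ((l - x)⁻¹) ^ 2) μ := by
  refine Integrable.of_bound (by fun_prop) ((Metric.infDist x μ.support)⁻¹ ^ 2) ?_
  filter_upwards [Measure.support_mem_ae] with l hl
  have := norm_resolvent_le_inv_infDist_support (A := ℝ) (by simpa using hx) hl
  simp only [resolvent, Ring.inverse_eq_inv', Algebra.algebraMap_self, RingHom.id_apply,
    Set.image_id'] at this
  rw [norm_pow]
  exact pow_le_pow_left₀ (norm_nonneg _) this 2

theorem integral_inv_sub_sq_pos [NeZero μ] (hx : x ∉ μ.support) :
    0 < ∫ l, ((l - x)⁻¹) ^ 2 ∂μ := by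
  have hsupp : Function.support (fun l => ((l - x)⁻¹) ^ 2) = {x}ᶜ := by
    ext l; simp [sub_eq_zero]
  rw [integral_pos_iff_support_of_nonneg (fun _ => sq_nonneg _) (integrable_inv_sub_sq hx),
    hsupp, measure_compl (measurableSet_singleton x) (measure_ne_top _ _)]
  obtain ⟨U, hU, hU0⟩ := Measure.notMem_support_iff_exists.1 hx
  rw [measure_mono_null (singleton_subset_iff.2 (mem_of_mem_nhds hU)) hU0, tsub_zero]
  exact pos_iff_ne_zero.2 (Measure.measure_univ_ne_zero.2 (NeZero.ne μ))

theorem strictMonoOn_Gst [NeZero μ] {s : Set ℝ} (hs : Convex ℝ s)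
    (hsupp : ∀ x ∈ s, x ∉ μ.support) : StrictMonoOn (Gst μ) s := by
  refine strictMonoOn_of_deriv_pos hs
    (fun x hx => (hasDerivAt_Gst (hsupp x hx)).continuousAt.continuousWithinAt) fun x hx => ?_
  have hx' := hsupp x (interior_subset hx)
  rw [(hasDerivAt_Gst hx').deriv]
  exact integral_inv_sub_sq_pos hx'

end Stieltjes

theorem inv_sub_mem_Icc {a b x l : ℝ} (hx : x ∈ Iio a ∪ Ioi b) (hl : l ∈ Icc a b) :
    (l - x)⁻¹ ∈ Icc (b - x)⁻¹ (a - x)⁻¹ := by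
  obtain ⟨hal, hlb⟩ := hl
  rcases hx with (hxa : x < a) | (hxb : b < x)
  · exact ⟨inv_anti₀ (by linarith) (by linarith), inv_anti₀ (by linarith) (by linarith)⟩
  · exact ⟨(inv_le_inv_of_neg (by linarith) (by linarith)).2 (by linarith),
      (inv_le_inv_of_neg (by linarith) (by linarith)).2 (by linarith)⟩

theorem isOpen_Dhat (μ : Measure ℝ) : IsOpen (Dhat μ) :=
  isOpen_Ioo.preimage continuous_coe_real_ereal

theorem ordConnected_Dhat (μ : Measure ℝ) : (Dhat μ).OrdConnected :=
  ordConnected_Ioo.preimage_mono EReal.coe_strictMono.monotone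

theorem inv_sub_inv_eq_neg_add_sq_mul {s t : ℝ} (hs : s ≠ 0) (ht : t ≠ 0) (hst : s * t ≠ 1) :
    (s - t⁻¹)⁻¹ = -(t + t ^ 2 * (s⁻¹ - t)⁻¹) := by
  have h1 : s * t - 1 ≠ 0 := sub_ne_zero.2 hst
  rw [show s - t⁻¹ = (s * t - 1) / t by field_simp,
    show s⁻¹ - t = -((s * t - 1) / s) by field_simp; ring, inv_neg, inv_div, inv_div,
    div_eq_iff h1, neg_mul, add_mul, mul_neg, neg_mul, mul_assoc, div_mul_cancel₀ _ h1]
  ring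

theorem add_inv_mem_Iio_union_Ioi {a b c t : ℝ} (hc : c < a) (ht0 : t ≠ 0)
    (ht : t < (b - c)⁻¹) : c + t⁻¹ ∈ Iio a ∪ Ioi b := by
  rcases ht0.lt_or_gt with hneg | hpos
  · exact Or.inl (show c + t⁻¹ < a by linarith [inv_lt_zero.2 hneg])
  · have := inv_strictAnti₀ hpos ht
    rw [inv_inv] at this
    exact Or.inr (show b < c + t⁻¹ by linarith)

theorem msupp_eq_support (μ : Measure ℝ) : msupp μ = μ.support := by
  ext x
  simp [msupp, Measure.mem_support_iff_forall, pos_iff_ne_zero]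

structure IsRTransformExtension (μ : Measure ℝ) (D : Set ℝ) (f : ℝ → ℝ) : Prop where
  isOpen : IsOpen D
  ordConnected : D.OrdConnected
  Dhat_subset : Dhat μ ⊆ D
  analyticOnNhd : AnalyticOnNhd ℝ f D
  eq_Rhat : ∀ u ∈ Dhat μ, u ≠ 0 → f u = Rhat μ u

namespace HasCompactSupp

variable {μ : Measure ℝ} [IsProbabilityMeasure μ]

theorem isCompact_support (hμ : HasCompactSupp μ) : IsCompact μ.support := by
  obtain ⟨K, hK, hK1⟩ := hμ
  refine hK.of_isClosed_subset Measure.isClosed_support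
    (Measure.support_subset_of_isClosed hK.isClosed ?_)
  rwa [mem_ae_iff, prob_compl_eq_zero_iff hK.measurableSet]

theorem support_subset_Icc (hμ : HasCompactSupp μ) :
    μ.support ⊆ Icc (aInf μ) (bSup μ) := fun _ hx => by
  rw [aInf, bSup, msupp_eq_support]
  exact ⟨csInf_le hμ.isCompact_support.bddBelow hx, le_csSup hμ.isCompact_support.bddAbove hx⟩

theorem aInf_le_bSup (hμ : HasCompactSupp μ) : aInf μ ≤ bSup μ := by
  obtain ⟨x, hx⟩ := Measure.nonempty_support (IsProbabilityMeasure.ne_zero μ)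
  exact (hμ.support_subset_Icc hx).1.trans (hμ.support_subset_Icc hx).2

theorem notMem_support (hμ : HasCompactSupp μ) {x : ℝ}
    (hx : x ∈ Iio (aInf μ) ∪ Ioi (bSup μ)) : x ∉ μ.support := by
  intro h
  obtain ⟨hax, hxb⟩ := hμ.support_subset_Icc h
  rcases hx with hx | hx
  exacts [not_le.2 hx hax, not_le.2 hx hxb]

theorem Gst_mem_Icc (hμ : HasCompactSupp μ) {x : ℝ} (hx : x ∈ Iio (aInf μ) ∪ Ioi (bSup μ)) :
    Gst μ x ∈ Icc (bSup μ - x)⁻¹ (aInf μ - x)⁻¹ := by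
  have hint := integrable_inv_sub (hμ.notMem_support hx)
  have hbound : ∀ᵐ l ∂μ, (l - x)⁻¹ ∈ Icc (bSup μ - x)⁻¹ (aInf μ - x)⁻¹ := by
    filter_upwards [Measure.support_mem_ae] with l hl
    exact inv_sub_mem_Icc hx (hμ.support_subset_Icc hl)
  constructor
  · simpa [Gst] using integral_mono_ae (integrable_const _) hint (hbound.mono fun _ hl => hl.1)
  · simpa [Gst] using integral_mono_ae hint (integrable_const _) (hbound.mono fun _ hl => hl.2)

theorem Gst_pos (hμ : HasCompactSupp μ) {x : ℝ} (hx : x < aInf μ) : 0 < Gst μ x :=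
  (inv_pos.2 (by linarith [hμ.aInf_le_bSup])).trans_le (hμ.Gst_mem_Icc (Or.inl hx)).1

theorem Gst_neg (hμ : HasCompactSupp μ) {x : ℝ} (hx : bSup μ < x) : Gst μ x < 0 :=
  (hμ.Gst_mem_Icc (Or.inr hx)).2.trans_lt (inv_lt_zero.2 (by linarith [hμ.aInf_le_bSup]))

theorem injOn_Gst (hμ : HasCompactSupp μ) : InjOn (Gst μ) (Iio (aInf μ) ∪ Ioi (bSup μ)) := by
  have hIio := strictMonoOn_Gst (μ := μ) (convex_Iio (aInf μ))
    fun x hx => hμ.notMem_support (Or.inl hx)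
  have hIoi := strictMonoOn_Gst (μ := μ) (convex_Ioi (bSup μ))
    fun x hx => hμ.notMem_support (Or.inr hx)
  rintro x (hx | hx) y (hy | hy) hxy
  · exact hIio.injOn hx hy hxy
  · exact absurd hxy ((hμ.Gst_neg hy).trans (hμ.Gst_pos hx)).ne'
  · exact absurd hxy ((hμ.Gst_neg hx).trans (hμ.Gst_pos hy)).ne
  · exact hIoi.injOn hx hy hxy

theorem Ginv_Gst (hμ : HasCompactSupp μ) {z : ℝ} (hz : z ∈ Iio (aInf μ) ∪ Ioi (bSup μ)) :
    Ginv μ (Gst μ z) = z :=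
  hμ.injOn_Gst.leftInvOn_invFunOn hz

theorem continuousOn_Gst (hμ : HasCompactSupp μ) :
    ContinuousOn (Gst μ) (Iio (aInf μ) ∪ Ioi (bSup μ)) := fun _ hx =>
  (hasDerivAt_Gst (hμ.notMem_support hx)).continuousAt.continuousWithinAt

theorem exists_lt_aInf_Gst_eq (hμ : HasCompactSupp μ) {v : ℝ} (hv0 : 0 < v)
    (hv : (v : EReal) < GaSup μ) : ∃ z < aInf μ, Gst μ z = v := by
  obtain ⟨_, ⟨z, hz, rfl⟩, hvz⟩ := lt_sSup_iff.1 hv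
  have hvz : v < Gst μ z := EReal.coe_lt_coe_iff.1 hvz
  set z₁ := min z (aInf μ - v⁻¹)
  have hz₁ : z₁ < aInf μ := (min_le_left _ _).trans_lt hz
  have hGz₁ : Gst μ z₁ ≤ v :=
    calc Gst μ z₁ ≤ (aInf μ - z₁)⁻¹ := (hμ.Gst_mem_Icc (Or.inl hz₁)).2
      _ ≤ v⁻¹⁻¹ := inv_anti₀ (inv_pos.2 hv0) (by linarith [min_le_right z (aInf μ - v⁻¹)])
      _ = v := inv_inv v
  obtain ⟨y, hy, hGy⟩ := intermediate_value_Icc (min_le_left _ _)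
    (hμ.continuousOn_Gst.mono fun y hy => Or.inl (hy.2.trans_lt hz)) ⟨hGz₁, hvz.le⟩
  exact ⟨y, hy.2.trans_lt hz, hGy⟩

theorem exists_gt_bSup_Gst_eq (hμ : HasCompactSupp μ) {v : ℝ} (hv0 : v < 0)
    (hv : GbInf μ < v) : ∃ z > bSup μ, Gst μ z = v := by
  obtain ⟨_, ⟨z, hz, rfl⟩, hvz⟩ := sInf_lt_iff.1 hv
  have hvz : Gst μ z < v := EReal.coe_lt_coe_iff.1 hvz
  set z₂ := max z (bSup μ - v⁻¹)
  have hz₂ : bSup μ < z₂ := hz.trans_le (le_max_left _ _)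
  have hGz₂ : v ≤ Gst μ z₂ :=
    calc v = v⁻¹⁻¹ := (inv_inv v).symm
      _ ≤ (bSup μ - z₂)⁻¹ := (inv_le_inv_of_neg (inv_lt_zero.2 hv0) (by linarith)).2
        (by linarith [le_max_right z (bSup μ - v⁻¹)])
      _ ≤ Gst μ z₂ := (hμ.Gst_mem_Icc (Or.inr hz₂)).1
  obtain ⟨y, hy, hGy⟩ := intermediate_value_Icc (le_max_left _ _)
    (hμ.continuousOn_Gst.mono fun y hy => Or.inr (hz.trans_le hy.1)) ⟨hvz.le, hGz₂⟩
  exact ⟨y, hz.trans_le hy.1, hGy⟩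

theorem exists_Gst_eq_neg (hμ : HasCompactSupp μ) {u : ℝ} (hu : u ∈ Dhat μ) (hu0 : u ≠ 0) :
    ∃ z ∈ Iio (aInf μ) ∪ Ioi (bSup μ), Gst μ z = -u := by
  rcases hu0.lt_or_gt with hneg | hpos
  · obtain ⟨z, hz, hGz⟩ := hμ.exists_lt_aInf_Gst_eq (neg_pos.2 hneg)
      (by rw [EReal.coe_neg]; exact EReal.neg_lt_comm.1 hu.1)
    exact ⟨z, Or.inl hz, hGz⟩
  · obtain ⟨z, hz, hGz⟩ := hμ.exists_gt_bSup_Gst_eq (neg_neg_of_pos hpos)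
      (by rw [EReal.coe_neg]; exact EReal.lt_neg_comm.1 hu.2)
    exact ⟨z, Or.inr hz, hGz⟩

theorem zero_mem_Dhat (hμ : HasCompactSupp μ) : (0 : ℝ) ∈ Dhat μ := by
  have hGa : (0 : EReal) < GaSup μ :=
    (EReal.coe_pos.2 (hμ.Gst_pos (sub_one_lt (aInf μ)))).trans_le
      (le_sSup (mem_image_of_mem _ (sub_one_lt (aInf μ))))
  have hGb : GbInf μ < 0 :=
    (sInf_le (mem_image_of_mem _ (lt_add_one (bSup μ)))).trans_lt
      (EReal.coe_neg'.2 (hμ.Gst_neg (lt_add_one (bSup μ))))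
  constructor
  · simpa using EReal.neg_lt_neg_iff.2 hGa
  · simpa using EReal.neg_lt_neg_iff.2 hGb

theorem analyticAt_Rhat (hμ : HasCompactSupp μ) {u : ℝ} (hu : u ∈ Dhat μ) (hu0 : u ≠ 0) :
    AnalyticAt ℝ (Rhat μ) u := by
  obtain ⟨z, hz, hGz⟩ := hμ.exists_Gst_eq_neg hu hu0
  have hsupp := hμ.notMem_support hz
  have hGinv : AnalyticAt ℝ (Ginv μ) (-u) := by
    rw [← hGz]
    refine (analyticAt_Gst hsupp).analyticAt_invFunOn ?_
      ((isOpen_Iio.union isOpen_Ioi).mem_nhds hz) hμ.injOn_Gst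
    rw [(hasDerivAt_Gst hsupp).deriv]
    exact (integral_inv_sub_sq_pos hsupp).ne'
  exact (hGinv.comp analyticAt_id.neg).sub (analyticAt_id.inv hu0)

theorem notMem_support_map_inv_sub (hμ : HasCompactSupp μ) {c t : ℝ} (hc : c < aInf μ)
    (ht : t < (bSup μ - c)⁻¹) : t ∉ (μ.map fun l => (l - c)⁻¹).support := by
  refine Measure.notMem_support_iff_exists.2 ⟨_, isOpen_Iio.mem_nhds ht, ?_⟩
  rw [Measure.map_apply (by fun_prop) measurableSet_Iio, measure_eq_zero_iff_ae_notMem]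
  filter_upwards [Measure.support_mem_ae] with l hl
  exact not_lt.2 (inv_sub_mem_Icc (Or.inl hc) (hμ.support_subset_Icc hl)).1

theorem Gst_add_inv (hμ : HasCompactSupp μ) {c t : ℝ} (hc : c < aInf μ) (ht0 : t ≠ 0)
    (ht : t < (bSup μ - c)⁻¹) :
    Gst μ (c + t⁻¹) = -(t + t ^ 2 * Gst (μ.map fun l => (l - c)⁻¹) t) := by
  have hmap : Gst (μ.map fun l => (l - c)⁻¹) t = ∫ l, ((l - c)⁻¹ - t)⁻¹ ∂μ :=
    integral_map (by fun_prop) (by fun_prop)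
  have hint : Integrable (fun l => ((l - c)⁻¹ - t)⁻¹) μ :=
    (integrable_map_measure (g := fun x => (x - t)⁻¹) (by fun_prop) (by fun_prop)).1
      (integrable_inv_sub (hμ.notMem_support_map_inv_sub hc ht))
  have hpt : ∀ᵐ l ∂μ, (l - (c + t⁻¹))⁻¹ = -(t + t ^ 2 * ((l - c)⁻¹ - t)⁻¹) := by
    filter_upwards [Measure.support_mem_ae] with l hl
    have hbound := (inv_sub_mem_Icc (Or.inl hc) (hμ.support_subset_Icc hl)).1
    have hlc : l - c ≠ 0 := by linarith [(hμ.support_subset_Icc hl).1]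
    have hst : (l - c) * t ≠ 1 := fun h =>
      (ht.trans_le hbound).ne (eq_inv_of_mul_eq_one_right h)
    rw [show l - (c + t⁻¹) = l - c - t⁻¹ by ring]
    exact inv_sub_inv_eq_neg_add_sq_mul hlc ht0 hst
  rw [Gst, integral_congr_ae hpt, integral_neg, integral_add (integrable_const _)
    (hint.const_mul _), integral_const_mul, ← hmap]
  simp

theorem exists_analyticAt_eq_Rhat_nhdsNE_zero (hμ : HasCompactSupp μ) :
    ∃ g : ℝ → ℝ, AnalyticAt ℝ g 0 ∧ ∀ᶠ u in 𝓝[≠] 0, g u = Rhat μ u := by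
  set c := aInf μ - 1
  have hc : c < aInf μ := sub_one_lt _
  set ν := μ.map fun l => (l - c)⁻¹
  have hbc : (0 : ℝ) < (bSup μ - c)⁻¹ := inv_pos.2 (by linarith [hμ.aInf_le_bSup])
  have hν0 : 0 ∉ ν.support := hμ.notMem_support_map_inv_sub hc hbc
  set Y : ℝ → ℝ := fun t => t + t ^ 2 * Gst ν t
  have hY : AnalyticAt ℝ Y 0 :=
    analyticAt_id.add ((analyticAt_id.pow 2).mul (analyticAt_Gst hν0))
  have hY0 : Y 0 = 0 := by simp [Y]
  have hY' : deriv Y 0 = 1 := by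
    have hd : HasDerivAt Y _ 0 :=
      (hasDerivAt_id (0 : ℝ)).add ((hasDerivAt_pow 2 (0 : ℝ)).mul (hasDerivAt_Gst hν0))
    rw [hd.deriv]
    simp
  obtain ⟨k, hk, hk0, hk', hYk⟩ := hY.exists_analyticAt_rightInverse (by simp [hY'])
  rw [hY0] at hk hk0 hk' hYk
  rw [hY', inv_one] at hk'
  obtain ⟨h, hh, hkh⟩ := hk.exists_analyticAt_eq_inv_sub_inv hk0 hk'
  refine ⟨fun u => c + h u, analyticAt_const.add hh, ?_⟩
  have hksmall : ∀ᶠ u in 𝓝 0, k u < (bSup μ - c)⁻¹ :=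
    hk.continuousAt.eventually_lt continuousAt_const (by rwa [hk0])
  filter_upwards [nhdsWithin_le_nhds hYk, nhdsWithin_le_nhds hksmall, self_mem_nhdsWithin]
    with u hYu hku hu0
  have hku0 : k u ≠ 0 := fun h0 => hu0 (by rw [mem_singleton_iff, ← hYu, h0, hY0])
  have hG : Gst μ (c + (k u)⁻¹) = -u := by
    rw [hμ.Gst_add_inv hc hku0 hku]
    exact congrArg Neg.neg hYu
  have hGinv : Ginv μ (-u) = c + (k u)⁻¹ := by
    rw [← hG, hμ.Ginv_Gst (add_inv_mem_Iio_union_Ioi hc hku0 hku)]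
  rw [Rhat, hGinv, hkh u hu0 hku0]
  ring

theorem exists_isRTransformExtension_Dhat (hμ : HasCompactSupp μ) :
    ∃ f, IsRTransformExtension μ (Dhat μ) f := by
  obtain ⟨g, hg, hgR⟩ := hμ.exists_analyticAt_eq_Rhat_nhdsNE_zero
  refine ⟨Function.update (Rhat μ) 0 (g 0), isOpen_Dhat μ, ordConnected_Dhat μ, subset_rfl,
    fun u hu => ?_, fun u _ hu0 => Function.update_of_ne hu0 _ _⟩
  rcases eq_or_ne u 0 with rfl | hu0
  · refine hg.congr ?_
    filter_upwards [eventually_nhdsWithin_iff.1 hgR] with v hv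
    rcases eq_or_ne v 0 with rfl | hv0
    · simp
    · rw [Function.update_of_ne hv0, hv hv0]
  · refine (hμ.analyticAt_Rhat hu hu0).congr ?_
    filter_upwards [isOpen_ne.mem_nhds hu0] with v hv using (Function.update_of_ne hv _ _).symm

end HasCompactSupp

namespace IsRTransformExtension

variable {μ : Measure ℝ} [IsProbabilityMeasure μ] {D D' : Set ℝ} {f f' : ℝ → ℝ}

theorem eqOn_inter (hμ : HasCompactSupp μ) (h : IsRTransformExtension μ D f)
    (h' : IsRTransformExtension μ D' f') : EqOn f f' (D ∩ D') := by
  have h0 := hμ.zero_mem_Dhat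
  refine AnalyticOnNhd.eqOn_of_preconnected_of_frequently_eq
    (fun x hx => h.analyticOnNhd x hx.1) (fun x hx => h'.analyticOnNhd x hx.2)
    (h.ordConnected.inter h'.ordConnected).isPreconnected
    ⟨h.Dhat_subset h0, h'.Dhat_subset h0⟩ (Eventually.frequently ?_)
  filter_upwards [nhdsWithin_le_nhds ((isOpen_Dhat μ).mem_nhds h0), self_mem_nhdsWithin]
    with u hu hu0
  rw [h.eq_Rhat u hu hu0, h'.eq_Rhat u hu hu0]

end IsRTransformExtension

def maxRTransformDomain (μ : Measure ℝ) : Set ℝ :=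
  ⋃₀ {D | ∃ f, IsRTransformExtension μ D f}

open Classical in
noncomputable def maxRTransform (μ : Measure ℝ) (u : ℝ) : ℝ :=
  if h : ∃ f D, IsRTransformExtension μ D f ∧ u ∈ D then h.choose u else 0

namespace IsRTransformExtension

variable {μ : Measure ℝ} {D : Set ℝ} {f : ℝ → ℝ}

theorem subset_maxRTransformDomain (h : IsRTransformExtension μ D f) :
    D ⊆ maxRTransformDomain μ :=
  subset_sUnion_of_mem ⟨f, h⟩

theorem maxRTransform_eq [IsProbabilityMeasure μ] (hμ : HasCompactSupp μ)
    (h : IsRTransformExtension μ D f) {u : ℝ} (hu : u ∈ D) : maxRTransform μ u = f u := by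
  have hex : ∃ f D, IsRTransformExtension μ D f ∧ u ∈ D := ⟨f, D, h, hu⟩
  obtain ⟨D', hD', huD'⟩ := hex.choose_spec
  rw [maxRTransform, dif_pos hex]
  exact hD'.eqOn_inter hμ h ⟨huD', hu⟩

end IsRTransformExtension

theorem HasCompactSupp.isRTransformExtension_max {μ : Measure ℝ} [IsProbabilityMeasure μ]
    (hμ : HasCompactSupp μ) :
    IsRTransformExtension μ (maxRTransformDomain μ) (maxRTransform μ) := by
  obtain ⟨f₀, h₀⟩ := hμ.exists_isRTransformExtension_Dhat
  refine ⟨isOpen_sUnion fun D ⟨_, h⟩ => h.isOpen, ?_, h₀.subset_maxRTransformDomain, ?_,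
    fun u hu hu0 => (h₀.maxRTransform_eq hμ hu).trans (h₀.eq_Rhat u hu hu0)⟩
  · exact isPreconnected_iff_ordConnected.1 <| isPreconnected_sUnion 0 _
      (fun D ⟨_, h⟩ => h.Dhat_subset hμ.zero_mem_Dhat)
      (fun D ⟨_, h⟩ => h.ordConnected.isPreconnected)
  · rintro u ⟨D, ⟨f, h⟩, hu⟩
    refine (h.analyticOnNhd u hu).congr ?_
    filter_upwards [h.isOpen.mem_nhds hu] with v hv using (h.maxRTransform_eq hμ hv).symm

/-- existence and uniqueness of the maximal real analytic extension
`R_μ : D_μ → ℝ` of the real `R`-transform `R̂_μ`. -/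
theorem statement9 (μ : MeasureTheory.Measure ℝ) [MeasureTheory.IsProbabilityMeasure μ]
    (hc : HasCompactSupp μ) :
    ∃ (Dm : Set ℝ) (Rm : ℝ → ℝ),
      (IsOpen Dm ∧ Dm.OrdConnected ∧ Dhat μ ⊆ Dm ∧ AnalyticOnNhd ℝ Rm Dm ∧
        (∀ u ∈ Dhat μ, u ≠ 0 → Rm u = Rhat μ u) ∧
        (∀ (D : Set ℝ) (f : ℝ → ℝ), IsOpen D → D.OrdConnected → Dhat μ ⊆ D →
          AnalyticOnNhd ℝ f D → (∀ u ∈ Dhat μ, u ≠ 0 → f u = Rhat μ u) →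
          D ⊆ Dm ∧ Set.EqOn f Rm D)) ∧
      (∀ (Dm' : Set ℝ) (Rm' : ℝ → ℝ),
        (IsOpen Dm' ∧ Dm'.OrdConnected ∧ Dhat μ ⊆ Dm' ∧ AnalyticOnNhd ℝ Rm' Dm' ∧
          (∀ u ∈ Dhat μ, u ≠ 0 → Rm' u = Rhat μ u) ∧
          (∀ (D : Set ℝ) (f : ℝ → ℝ), IsOpen D → D.OrdConnected → Dhat μ ⊆ D →
            AnalyticOnNhd ℝ f D → (∀ u ∈ Dhat μ, u ≠ 0 → f u = Rhat μ u) →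
            D ⊆ Dm' ∧ Set.EqOn f Rm' D)) →
        Dm' = Dm ∧ Set.EqOn Rm' Rm Dm) := by
  have hmax : ∀ D f, IsRTransformExtension μ D f →
      D ⊆ maxRTransformDomain μ ∧ EqOn f (maxRTransform μ) D := fun D f h =>
    ⟨h.subset_maxRTransformDomain, fun u hu => (h.maxRTransform_eq hc hu).symm⟩
  obtain ⟨hopen, hord, hsub, han, hR⟩ := hc.isRTransformExtension_max
  refine ⟨_, _, ⟨hopen, hord, hsub, han, hR, fun D f h₁ h₂ h₃ h₄ h₅ =>
    hmax D f ⟨h₁, h₂, h₃, h₄, h₅⟩⟩, ?_⟩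
  rintro D' R' ⟨h₁, h₂, h₃, h₄, h₅, hmax'⟩
  obtain ⟨hsubD', hR'⟩ := hmax' _ _ hopen hord hsub han hR
  exact ⟨(hmax D' R' ⟨h₁, h₂, h₃, h₄, h₅⟩).1.antisymm hsubD', hR'.symm⟩
end

section
/- Let β > 0 and let ν be a compactly supported probability measure on ℝ with a_ν := inf(supp ν). Then the function h ↦ h + β/(1 + G_ν(h)) is strictly concave on the interval (−∞, a_ν). (Note that G_ν(h) > 0 for h < a_ν, so 1 + G_ν(h) > 0 there.) -/
open MeasureTheory Filter Set

/-! With `Gₙ(h) = ∫ (λ - h)⁻ⁿ dν(λ)`, differentiation under the integral gives `G₁' = G₂` and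
`G₂' = 2 G₃`, so the second derivative of `h ↦ h + β / (1 + G₁ h)` is
`-2β ((1 + G₁) G₃ - G₂²) / (1 + G₁)³`. Cauchy–Schwarz with the weight `(λ - h)⁻¹` gives
`G₂² ≤ G₁ G₃ < (1 + G₁) G₃`, and all `Gₙ` are positive left of the support. -/

open Topology

theorem measure_compl_msupp (μ : Measure ℝ) : μ (msupp μ)ᶜ = 0 := by
  refine measure_null_of_locally_null _ fun x hx => ?_
  obtain ⟨U, hU, hU0⟩ : ∃ U ∈ 𝓝 x, μ U = 0 := by simpa [msupp] using hx
  exact ⟨(msupp μ)ᶜ ∩ U, inter_mem_nhdsWithin _ hU, measure_mono_null inter_subset_right hU0⟩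

theorem msupp_subset_of_measure_compl_eq_zero {μ : Measure ℝ} {K : Set ℝ} (hK : IsClosed K)
    (h : μ Kᶜ = 0) : msupp μ ⊆ K := fun x hx => by
  by_contra hxK
  exact hx Kᶜ (hK.isOpen_compl.mem_nhds hxK) h

theorem HasCompactSupp.bddBelow_msupp {μ : Measure ℝ} [IsProbabilityMeasure μ]
    (hc : HasCompactSupp μ) : BddBelow (msupp μ) := by
  obtain ⟨K, hK, hK1⟩ := hc
  refine hK.bddBelow.mono (msupp_subset_of_measure_compl_eq_zero hK.isClosed ?_)
  rw [measure_compl hK.isClosed.measurableSet (measure_ne_top μ K), hK1, measure_univ,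
    tsub_self]

theorem HasCompactSupp.ae_aInf_le {μ : Measure ℝ} [IsProbabilityMeasure μ]
    (hc : HasCompactSupp μ) : ∀ᵐ l ∂μ, aInf μ ≤ l :=
  (ae_iff.2 (measure_compl_msupp μ) : ∀ᵐ l ∂μ, l ∈ msupp μ).mono fun _ hl =>
    csInf_le hc.bddBelow_msupp hl

theorem sq_integral_mul_le_integral_mul_integral_mul_sq {α : Type*} [MeasurableSpace α]
    {μ : Measure α} {w u : α → ℝ} (hw : 0 ≤ᵐ[μ] w) (hw_int : Integrable w μ)
    (hwu : Integrable (fun x => w x * u x) μ) (hwu2 : Integrable (fun x => w x * u x ^ 2) μ) :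
    (∫ x, w x * u x ∂μ) ^ 2 ≤ (∫ x, w x ∂μ) * ∫ x, w x * u x ^ 2 ∂μ := by
  have hquad : ∀ s : ℝ, 0 ≤ (∫ x, w x ∂μ) * (s * s) + (-2 * ∫ x, w x * u x ∂μ) * s
      + ∫ x, w x * u x ^ 2 ∂μ := fun s => by
    have hexpand : ∫ x, w x * (u x - s) ^ 2 ∂μ = (∫ x, w x ∂μ) * (s * s)
        + (-2 * ∫ x, w x * u x ∂μ) * s + ∫ x, w x * u x ^ 2 ∂μ := by
      simp only [show ∀ x, w x * (u x - s) ^ 2 = w x * u x ^ 2 - 2 * s * (w x * u x)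
        + s ^ 2 * w x from fun x => by ring]
      have hsub : Integrable (fun x => w x * u x ^ 2 - 2 * s * (w x * u x)) μ :=
        hwu2.sub (hwu.const_mul _)
      rw [integral_add hsub (hw_int.const_mul _), integral_sub hwu2 (hwu.const_mul _),
        integral_const_mul, integral_const_mul]
      ring
    rw [← hexpand]
    exact integral_nonneg_of_ae (hw.mono fun x hx => mul_nonneg hx (sq_nonneg _))
  have := discrim_le_zero hquad
  rw [discrim] at this
  linarith

theorem norm_inv_sub_pow_le {ε l t : ℝ} (hε : 0 < ε) (h : ε ≤ l - t) (n : ℕ) :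
    ‖((l - t)⁻¹) ^ n‖ ≤ (ε⁻¹) ^ n := by
  rw [norm_pow, norm_inv, Real.norm_of_nonneg (hε.trans_le h).le]
  exact pow_le_pow_left₀ (inv_nonneg.2 (hε.trans_le h).le) (inv_anti₀ hε h) n

theorem hasDerivAt_inv_sub_pow {l t : ℝ} (h : l - t ≠ 0) (n : ℕ) :
    HasDerivAt (fun t => ((l - t)⁻¹) ^ n) (n * ((l - t)⁻¹) ^ (n + 1)) t := by
  refine ((((hasDerivAt_id' t).const_sub l).inv h).pow n).congr_deriv ?_
  simp only [Pi.inv_apply, neg_neg, one_div, ← inv_pow]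
  rcases n with _ | n
  · simp
  · simp only [Nat.cast_succ, add_tsub_cancel_right]
    ring

noncomputable def stieltjesMoment (ν : Measure ℝ) (n : ℕ) (h : ℝ) : ℝ := ∫ l, ((l - h)⁻¹) ^ n ∂ν

theorem Gst_eq_stieltjesMoment_one (ν : Measure ℝ) : Gst ν = stieltjesMoment ν 1 := by
  ext h
  simp [Gst, stieltjesMoment]

section Moments

variable {ν : Measure ℝ} {a h : ℝ}

theorem integrable_inv_sub_pow [IsFiniteMeasure ν] (hν : ∀ᵐ l ∂ν, a ≤ l) (hh : h < a) (n : ℕ) :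
    Integrable (fun l => ((l - h)⁻¹) ^ n) ν :=
  (integrable_const ((a - h)⁻¹ ^ n)).mono'
    (((measurable_id.sub_const h).inv.pow_const n).aestronglyMeasurable)
    (hν.mono fun _ hl => norm_inv_sub_pow_le (sub_pos.2 hh) (by linarith) n)

theorem stieltjesMoment_pos [IsFiniteMeasure ν] [NeZero ν] (hν : ∀ᵐ l ∂ν, a ≤ l) (hh : h < a)
    (n : ℕ) : 0 < stieltjesMoment ν n h := by
  have hpos : ∀ᵐ l ∂ν, 0 < ((l - h)⁻¹) ^ n :=
    hν.mono fun l hl => pow_pos (inv_pos.2 (by linarith)) n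
  refine (integral_pos_iff_support_of_nonneg_ae (hpos.mono fun _ hl => hl.le)
    (integrable_inv_sub_pow hν hh n)).2 ?_
  have hsupp : ν (Function.support fun l => ((l - h)⁻¹) ^ n)ᶜ = 0 :=
    measure_mono_null (fun l hl => (Function.notMem_support.1 hl).not_gt) (ae_iff.1 hpos)
  rw [measure_congr (ae_eq_univ.2 hsupp)]
  exact Measure.measure_univ_pos.2 (NeZero.ne ν)

theorem hasDerivAt_stieltjesMoment [IsFiniteMeasure ν] (hν : ∀ᵐ l ∂ν, a ≤ l) (hh : h < a)
    (n : ℕ) : HasDerivAt (stieltjesMoment ν n) (n * stieltjesMoment ν (n + 1) h) h := by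
  set ε := (a - h) / 2
  have hε : 0 < ε := by simp only [ε]; linarith
  have hball : ∀ᵐ l ∂ν, ∀ t ∈ Metric.ball h ε, ε ≤ l - t := hν.mono fun l hl t ht => by
    rw [Metric.mem_ball, Real.dist_eq, abs_lt] at ht
    simp only [ε] at *
    linarith
  have key := hasDerivAt_integral_of_dominated_loc_of_deriv_le (μ := ν)
    (F := fun t l => ((l - t)⁻¹) ^ n) (F' := fun t l => n * ((l - t)⁻¹) ^ (n + 1))
    (bound := fun _ => n * (ε⁻¹) ^ (n + 1)) (Metric.ball_mem_nhds h hε)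
    (Eventually.of_forall fun t =>
      ((measurable_id.sub_const t).inv.pow_const n).aestronglyMeasurable)
    (integrable_inv_sub_pow hν hh n)
    (((measurable_id.sub_const h).inv.pow_const (n + 1)).const_mul _).aestronglyMeasurable
    (hball.mono fun l hl t ht => by
      rw [norm_mul, Real.norm_natCast]
      exact mul_le_mul_of_nonneg_left (norm_inv_sub_pow_le hε (hl t ht) _) n.cast_nonneg)
    (integrable_const _)
    (hball.mono fun l hl t ht => hasDerivAt_inv_sub_pow (hε.trans_le (hl t ht)).ne' n)
  rw [stieltjesMoment, ← integral_const_mul]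
  exact key.2

theorem sq_stieltjesMoment_two_le [IsFiniteMeasure ν] (hν : ∀ᵐ l ∂ν, a ≤ l) (hh : h < a) :
    stieltjesMoment ν 2 h ^ 2 ≤ stieltjesMoment ν 1 h * stieltjesMoment ν 3 h := by
  have hint := integrable_inv_sub_pow hν hh
  have hw : 0 ≤ᵐ[ν] fun l => (l - h)⁻¹ := hν.mono fun l hl => inv_nonneg.2 (by linarith)
  simpa only [stieltjesMoment, pow_one, ← sq, ← pow_succ'] using
    sq_integral_mul_le_integral_mul_integral_mul_sq (u := fun l => (l - h)⁻¹) hw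
      (by simpa using hint 1) (by simpa only [← sq] using hint 2)
      (by simpa only [← pow_succ'] using hint 3)

end Moments

theorem strictConcaveOn_add_div_one_add_Gst {ν : Measure ℝ} [IsFiniteMeasure ν] [NeZero ν]
    {a β : ℝ} (hβ : 0 < β) (hν : ∀ᵐ l ∂ν, a ≤ l) :
    StrictConcaveOn ℝ (Iio a) fun h => h + β / (1 + Gst ν h) := by
  rw [Gst_eq_stieltjesMoment_one]
  set m := stieltjesMoment ν
  have hq : ∀ x < a, 0 < 1 + m 1 x := fun x hx => by
    linarith [stieltjesMoment_pos hν hx 1]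
  have hm1 : ∀ x < a, HasDerivAt (fun h => 1 + m 1 h) (m 2 x) x := fun x hx => by
    simpa using (hasDerivAt_stieltjesMoment hν hx 1).const_add 1
  have hf' : ∀ x < a, HasDerivAt (fun h => h + β / (1 + m 1 h))
      (1 - β * m 2 x / (1 + m 1 x) ^ 2) x := fun x hx => by
    refine ((hasDerivAt_id' x).add ((hasDerivAt_const x β).div (hm1 x hx) (hq x hx).ne')
      ).congr_deriv ?_
    field_simp
    ring
  have hf'' : ∀ x < a, HasDerivAt (fun h => 1 - β * m 2 h / (1 + m 1 h) ^ 2)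
      (-(2 * β * ((1 + m 1 x) * m 3 x - m 2 x ^ 2) / (1 + m 1 x) ^ 3)) x := fun x hx => by
    have hnum : HasDerivAt (fun h => β * m 2 h) (β * (2 * m 3 x)) x := by
      simpa using (hasDerivAt_stieltjesMoment hν hx 2).const_mul β
    have hden := (hm1 x hx).pow 2
    refine ((hnum.div hden (pow_pos (hq x hx) 2).ne').const_sub 1).congr_deriv ?_
    simp only [Pi.pow_apply]
    field_simp [(hq x hx).ne']
    ring
  refine strictConcaveOn_of_deriv2_neg (convex_Iio a)
    (fun x hx => (hf' x hx).continuousAt.continuousWithinAt) fun x hx => ?_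
  rw [interior_Iio] at hx
  have hderiv : deriv (fun h => h + β / (1 + m 1 h)) =ᶠ[𝓝 x]
      fun h => 1 - β * m 2 h / (1 + m 1 h) ^ 2 :=
    eventually_of_mem (Iio_mem_nhds hx) fun y hy => (hf' y hy).deriv
  rw [Function.iterate_succ_apply, Function.iterate_one, hderiv.deriv_eq, (hf'' x hx).deriv,
    neg_lt_zero]
  have hgap : 0 < (1 + m 1 x) * m 3 x - m 2 x ^ 2 := by
    nlinarith [sq_stieltjesMoment_two_le hν hx, stieltjesMoment_pos hν hx 3]
  have hqx := hq x hx
  positivity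

/-- strict concavity of `h ↦ h + β / (1 + G_ν(h))` on `(-∞, a_ν)`
(the function `F` for the Marchenko–Pastur law). -/
theorem statement16 (β : ℝ) (hβ : 0 < β) (ν : MeasureTheory.Measure ℝ)
    [MeasureTheory.IsProbabilityMeasure ν] (hc : HasCompactSupp ν) :
    StrictConcaveOn ℝ (Set.Iio (aInf ν)) (fun h : ℝ => h + β / (1 + Gst ν h)) :=
  strictConcaveOn_add_div_one_add_Gst hβ hc.ae_aInf_le
end

section
/- Let μ be a compactly supported probability measure on ℝ with a_μ := inf(supp μ) and b_μ := sup(supp μ). Then the complex Stieltjes transform G_μ(z) = ∫ (λ − z)⁻¹ dμ(λ), which is holomorphic on ℂ∖supp μ, is injective on the open set B = { z ∈ ℂ : Re z ∉ [a_μ, b_μ] }. -/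
open MeasureTheory Filter Set

/-- The complex Stieltjes transform. -/
noncomputable def Gc (μ : MeasureTheory.Measure ℝ) (z : ℂ) : ℂ := ∫ l, ((l : ℂ) - z)⁻¹ ∂μ


/-!
Holomorphy off the support is Mathlib's `analyticOn_resolventTransform`, once `msupp` is
identified with `Measure.support`. For injectivity write
`G(z₁) - G(z₂) = (z₁ - z₂) ∫ dμ(λ) / ((λ - z₁)(λ - z₂))`. If `z₁, z₂` lie on the same side of
`[a_μ, b_μ]`, the factors `λ - zⱼ` lie in one open half-plane `±Re > 0` and their imaginary parts
do not depend on `λ`; hence all products `(λ - z₁)(λ - z₂)` lie in one fixed open half-plane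
(`Re > 0` if `Im z₁ Im z₂ ≤ 0`, otherwise `±Im > 0`), and the integral has a nonzero component in
a fixed direction. If they lie on opposite sides, `Re G(z₁)` and `Re G(z₂)` have opposite signs.
-/

namespace StieltjesTransform

open Complex

variable {μ : Measure ℝ}

theorem msupp_eq_support (μ : Measure ℝ) : msupp μ = μ.support := by
  ext x
  simp [msupp, Measure.mem_support_iff_forall, pos_iff_ne_zero]

theorem resolvent_eq_inv_ofReal_sub (z : ℂ) :
    resolvent (R := ℝ) z = fun l : ℝ => ((l : ℂ) - z)⁻¹ := by
  ext l
  simp [resolvent, Ring.inverse_eq_inv']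

theorem Gc_eq_resolventTransform (μ : Measure ℝ) : Gc μ = resolventTransform μ := by
  ext z
  rw [resolventTransform_apply, resolvent_eq_inv_ofReal_sub, Gc]

theorem image_ofReal_eq_image_algebraMap (s : Set ℝ) :
    (fun x : ℝ => (x : ℂ)) '' s = algebraMap ℝ ℂ '' s := by
  rw [Complex.coe_algebraMap]

theorem differentiableOn_Gc [IsFiniteMeasure μ] :
    DifferentiableOn ℂ (Gc μ) (((fun x : ℝ => (x : ℂ)) '' msupp μ)ᶜ) := by
  rw [Gc_eq_resolventTransform, msupp_eq_support, image_ofReal_eq_image_algebraMap]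
  exact analyticOn_resolventTransform.differentiableOn

theorem integrable_inv_ofReal_sub [IsFiniteMeasure μ] {z : ℂ}
    (hz : z ∉ (fun x : ℝ => (x : ℂ)) '' msupp μ) :
    Integrable (fun l : ℝ => ((l : ℂ) - z)⁻¹) μ := by
  rw [msupp_eq_support, image_ofReal_eq_image_algebraMap] at hz
  exact resolvent_eq_inv_ofReal_sub z ▸ integrable_resolvent hz

theorem msupp_subset_Icc [IsProbabilityMeasure μ] (hc : HasCompactSupp μ) :
    msupp μ ⊆ Icc (aInf μ) (bSup μ) := by
  obtain ⟨K, hK, hK1⟩ := hc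
  have hKae : K ∈ ae μ := by
    rw [mem_ae_iff, measure_compl hK.measurableSet (measure_ne_top μ K), hK1, measure_univ,
      tsub_self]
  have hsub : msupp μ ⊆ K :=
    msupp_eq_support μ ▸ Measure.support_subset_of_isClosed hK.isClosed hKae
  exact fun x hx => ⟨csInf_le (hK.bddBelow.mono hsub) hx, le_csSup (hK.bddAbove.mono hsub) hx⟩

theorem notMem_image_msupp_of_re [IsProbabilityMeasure μ] (hc : HasCompactSupp μ) {z : ℂ}
    (hz : z.re < aInf μ ∨ bSup μ < z.re) : z ∉ (fun x : ℝ => (x : ℂ)) '' msupp μ := by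
  rintro ⟨x, hx, rfl⟩
  have hx' := msupp_subset_Icc hc hx
  rw [ofReal_re] at hz
  rcases hz with hz | hz <;> linarith [hx'.1, hx'.2]

theorem integral_ne_zero_of_re_mul_pos {α : Type*} [MeasurableSpace α] {ν : Measure α}
    [NeZero ν] {f : α → ℂ} (hf : Integrable f ν) (c : ℂ)
    (h : ∀ᵐ x ∂ν, 0 < (c * f x).re) : ∫ x, f x ∂ν ≠ 0 := by
  intro h0
  have hre : ∫ x, (c * f x).re ∂ν = 0 := by
    have hcomm := integral_re (hf.const_mul c)
    simp only [RCLike.re_to_complex] at hcomm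
    rw [hcomm, integral_const_mul, h0, mul_zero, zero_re]
  have hsupp : 0 < ν (Function.support fun x => (c * f x).re) := by
    refine pos_iff_ne_zero.2 fun hnull => ?_
    obtain ⟨x, hpos, hzero⟩ := (h.and (measure_eq_zero_iff_ae_notMem.1 hnull)).exists
    exact hpos.ne' (Function.notMem_support.1 hzero)
  have := (integral_pos_iff_support_of_nonneg_ae (h.mono fun x hx => hx.le)
    (hf.const_mul c).re).2 hsupp
  linarith

theorem re_inv_pos {u : ℂ} (h : 0 < u.re) : 0 < (u⁻¹).re := by
  rw [inv_re]
  exact div_pos h (normSq_pos.2 fun hu => by simp [hu] at h)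

theorem exists_forall_re_mul_mul_pos (z₁ z₂ : ℂ) : ∃ d : ℂ, ∀ t : ℝ,
    0 < (z₁ + t).re → 0 < (z₂ + t).re → 0 < (d * ((z₁ + t) * (z₂ + t))).re := by
  rcases le_or_gt (z₁.im * z₂.im) 0 with h | h
  · refine ⟨1, fun t h₁ h₂ => ?_⟩
    simp only [one_mul, mul_re, add_im, ofReal_im, add_zero] at *
    nlinarith
  · rcases lt_or_gt_of_ne (left_ne_zero_of_mul h.ne') with h₁ | h₁
    · refine ⟨I, fun t ht₁ ht₂ => ?_⟩
      have h₂ : z₂.im < 0 := by nlinarith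
      simp only [I_mul_re, mul_im, add_im, ofReal_im, add_zero] at *
      nlinarith
    · refine ⟨-I, fun t ht₁ ht₂ => ?_⟩
      have h₂ : 0 < z₂.im := by nlinarith
      simp only [neg_mul, neg_re, I_mul_re, neg_neg, mul_im, add_im, ofReal_im, add_zero] at *
      nlinarith

theorem exists_forall_re_mul_inv_sub_inv_pos {z₁ z₂ : ℂ} (hne : z₁ ≠ z₂) : ∃ c : ℂ, ∀ t : ℝ,
    0 < (z₁ + t).re → 0 < (z₂ + t).re → 0 < (c * ((z₁ + t)⁻¹ - (z₂ + t)⁻¹)).re := by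
  obtain ⟨d, hd⟩ := exists_forall_re_mul_mul_pos z₁ z₂
  refine ⟨(d * (z₂ - z₁))⁻¹, fun t h₁ h₂ => ?_⟩
  have hw₁ : z₁ + t ≠ 0 := fun h => by simp [h] at h₁
  have hw₂ : z₂ + t ≠ 0 := fun h => by simp [h] at h₂
  have hsub : z₂ - z₁ ≠ 0 := sub_ne_zero.2 hne.symm
  have hprod : (d * (z₂ - z₁))⁻¹ * ((z₁ + t)⁻¹ - (z₂ + t)⁻¹)
      = (d * ((z₁ + t) * (z₂ + t)))⁻¹ := by
    rw [inv_sub_inv hw₁ hw₂, add_sub_add_right_eq_sub, mul_inv, mul_inv, div_eq_mul_inv,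
      ← mul_assoc, mul_assoc d⁻¹, inv_mul_cancel₀ hsub, mul_one]
  rw [hprod]
  exact re_inv_pos (hd t h₁ h₂)

theorem exists_forall_mem_Icc_re_mul_inv_sub_inv_pos {a b : ℝ} {z₁ z₂ : ℂ}
    (h₁ : z₁.re < a ∨ b < z₁.re) (h₂ : z₂.re < a ∨ b < z₂.re) (hne : z₁ ≠ z₂) :
    ∃ c : ℂ, ∀ l ∈ Icc a b, 0 < (c * (((l : ℂ) - z₁)⁻¹ - ((l : ℂ) - z₂)⁻¹)).re := by
  rcases h₁ with h₁ | h₁ <;> rcases h₂ with h₂ | h₂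
  · obtain ⟨c, hc⟩ := exists_forall_re_mul_inv_sub_inv_pos (neg_injective.ne hne)
    refine ⟨c, fun l hl => ?_⟩
    simpa only [neg_add_eq_sub] using hc l
      (by rw [add_re, neg_re, ofReal_re]; linarith [hl.1])
      (by rw [add_re, neg_re, ofReal_re]; linarith [hl.1])
  · refine ⟨1, fun l hl => ?_⟩
    have hpos₁ : 0 < ((l : ℂ) - z₁)⁻¹.re := re_inv_pos (by rw [sub_re, ofReal_re]; linarith [hl.1])
    have hpos₂ : 0 < (z₂ - (l : ℂ))⁻¹.re := re_inv_pos (by rw [sub_re, ofReal_re]; linarith [hl.2])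
    rw [← neg_sub z₂, inv_neg, one_mul, sub_re, neg_re]
    linarith
  · refine ⟨-1, fun l hl => ?_⟩
    have hpos₁ : 0 < (z₁ - (l : ℂ))⁻¹.re := re_inv_pos (by rw [sub_re, ofReal_re]; linarith [hl.2])
    have hpos₂ : 0 < ((l : ℂ) - z₂)⁻¹.re := re_inv_pos (by rw [sub_re, ofReal_re]; linarith [hl.1])
    rw [← neg_sub z₁, inv_neg, neg_one_mul, neg_re, sub_re, neg_re]
    linarith
  · obtain ⟨c, hc⟩ := exists_forall_re_mul_inv_sub_inv_pos hne
    refine ⟨-c, fun l hl => ?_⟩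
    convert hc (-l) (by rw [add_re, ofReal_re]; linarith [hl.2])
      (by rw [add_re, ofReal_re]; linarith [hl.2]) using 2
    rw [← neg_sub z₁, ← neg_sub z₂, inv_neg, inv_neg, ofReal_neg, ← sub_eq_add_neg,
      ← sub_eq_add_neg]
    ring

theorem injOn_Gc [IsProbabilityMeasure μ] (hc : HasCompactSupp μ) :
    InjOn (Gc μ) {z : ℂ | z.re < aInf μ ∨ bSup μ < z.re} := by
  intro z₁ h₁ z₂ h₂ heq
  by_contra hne
  obtain ⟨c, hpos⟩ := exists_forall_mem_Icc_re_mul_inv_sub_inv_pos h₁ h₂ hne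
  have hint₁ := integrable_inv_ofReal_sub (notMem_image_msupp_of_re hc h₁)
  have hint₂ := integrable_inv_ofReal_sub (notMem_image_msupp_of_re hc h₂)
  refine integral_ne_zero_of_re_mul_pos
    (f := fun l : ℝ => ((l : ℂ) - z₁)⁻¹ - ((l : ℂ) - z₂)⁻¹) (hint₁.sub hint₂) c ?_ ?_
  · filter_upwards [Measure.support_mem_ae] with l hl
    exact hpos l (msupp_subset_Icc hc (msupp_eq_support μ ▸ hl))
  · rw [integral_sub hint₁ hint₂]
    exact sub_eq_zero.2 heq

end StieltjesTransform

/-- the complex Stieltjes transform is holomorphic off the support and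
injective on `{z : Re z ∉ [a_μ, b_μ]}`. -/
theorem statement17 (μ : MeasureTheory.Measure ℝ) [MeasureTheory.IsProbabilityMeasure μ]
    (hc : HasCompactSupp μ) :
    DifferentiableOn ℂ (Gc μ) (((fun x : ℝ => (x : ℂ)) '' msupp μ)ᶜ) ∧
    Set.InjOn (Gc μ) {z : ℂ | z.re < aInf μ ∨ bSup μ < z.re} :=
  ⟨StieltjesTransform.differentiableOn_Gc, StieltjesTransform.injOn_Gc hc⟩
end
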